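/- arXiv:2309.04101 — 3 statements merged into one kernel-verified Lean document; each statement's English description precedes it below -/
import Mathlib

section
/- For every n ≥ 5, the largest eigenvalue of the signed graph Γ2 of order n is strictly smaller than that of the signed graph Γ1 of order n: λ1(Γ2) < λ1(Γ1). -/
open scoped BigOperators

/-- A signed graph on the vertex set `Fin n`: a simple graph together with a
symmetric `±1` sign on each edge. -/
structure SignedGraph (n : ℕ) where
  G : SimpleGraph (Fin n)
  sign : Fin n → Fin n → ℤ
  sign_symm : ∀ i j, sign i j = sign j i
  sign_pm : ∀ i j, G.Adj i j → sign i j = 1 ∨ sign i j = -1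

namespace SignedGraph

variable {n : ℕ}

open Classical in
/-- The adjacency matrix of a signed graph, as a real matrix. -/
noncomputable def adjMatrix (Γ : SignedGraph n) : Matrix (Fin n) (Fin n) ℝ :=
  fun i j => if Γ.G.Adj i j then (Γ.sign i j : ℝ) else 0

/-- The largest eigenvalue (the index) of a signed graph. -/
noncomputable def lambda1 (Γ : SignedGraph n) : ℝ :=
  sSup (spectrum ℝ Γ.adjMatrix)

/-- The sign of an unordered edge. -/
def signEdge (Γ : SignedGraph n) : Sym2 (Fin n) → ℤ :=
  Sym2.lift ⟨Γ.sign, Γ.sign_symm⟩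

/-- The sign of a walk: the product of the signs of its edges. -/
def walkSign (Γ : SignedGraph n) {u v : Fin n} (w : Γ.G.Walk u v) : ℤ :=
  (w.edges.map Γ.signEdge).prod

/-- A negative cycle: a cycle whose sign is `-1`
(equivalently, with an odd number of negative edges). -/
def IsNegCycle (Γ : SignedGraph n) {u : Fin n} (c : Γ.G.Walk u u) : Prop :=
  c.IsCycle ∧ Γ.walkSign c = -1

/-- A signed graph is unbalanced if it contains a negative cycle. -/
def Unbalanced (Γ : SignedGraph n) : Prop :=
  ∃ (u : Fin n) (c : Γ.G.Walk u u), Γ.IsNegCycle c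

/-- A signed graph is negative-`C₄`-free if it contains no negative 4-cycle. -/
def NegC4Free (Γ : SignedGraph n) : Prop :=
  ∀ (u : Fin n) (c : Γ.G.Walk u u), c.IsCycle → c.length = 4 → Γ.walkSign c ≠ -1

end SignedGraph

/-- The signed graph `Γ₁`: vertices `2,…,n-1` induce an all-positive complete
graph, vertices `0` and `1` are joined to each other by a negative edge and to
vertex `2` by positive edges, and have no other neighbours. -/
def Gamma1 (n : ℕ) : SignedGraph n where
  G :=
    { Adj := fun i j => i ≠ j ∧ (2 ≤ min i.val j.val ∨ max i.val j.val ≤ 2)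
      symm := by
        constructor
        intro i j h
        refine ⟨Ne.symm h.1, ?_⟩
        rw [min_comm, max_comm]
        exact h.2
      loopless := by constructor; intro i h; exact h.1 rfl }
  sign := fun i j =>
    if (i.val = 0 ∧ j.val = 1) ∨ (i.val = 1 ∧ j.val = 0) then -1 else 1
  sign_symm := by
    intro i j
    try dsimp only
    by_cases h : (i.val = 0 ∧ j.val = 1) ∨ (i.val = 1 ∧ j.val = 0)
    · rw [if_pos h, if_pos (by tauto)]
    · rw [if_neg h, if_neg (by tauto)]
  sign_pm := by
    intro i j _
    try dsimp only
    by_cases h : (i.val = 0 ∧ j.val = 1) ∨ (i.val = 1 ∧ j.val = 0)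
    · rw [if_pos h]; right; rfl
    · rw [if_neg h]; left; rfl

/-- The signed graph `Γ₂`: vertices `4,…,n-1` induce an all-positive complete
graph, vertices `2` and `3` are joined by positive edges to all of `4,…,n-1`
(but not to each other), vertices `0` and `1` are joined to each other by a
negative edge and to `2` and `3` by positive edges, and have no other
neighbours. -/
def Gamma2 (n : ℕ) : SignedGraph n where
  G :=
    { Adj := fun i j => i ≠ j ∧
        ((i.val ≤ 1 ∧ j.val ≤ 3) ∨ (j.val ≤ 1 ∧ i.val ≤ 3) ∨
         (2 ≤ i.val ∧ i.val ≤ 3 ∧ 4 ≤ j.val) ∨ (2 ≤ j.val ∧ j.val ≤ 3 ∧ 4 ≤ i.val) ∨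
         (4 ≤ i.val ∧ 4 ≤ j.val))
      symm := by
        constructor
        intro i j h
        exact ⟨Ne.symm h.1, by tauto⟩
      loopless := by constructor; intro i h; exact h.1 rfl }
  sign := fun i j =>
    if (i.val = 0 ∧ j.val = 1) ∨ (i.val = 1 ∧ j.val = 0) then -1 else 1
  sign_symm := by
    intro i j
    try dsimp only
    by_cases h : (i.val = 0 ∧ j.val = 1) ∨ (i.val = 1 ∧ j.val = 0)
    · rw [if_pos h, if_pos (by tauto)]
    · rw [if_neg h, if_neg (by tauto)]
  sign_pm := by
    intro i j _
    try dsimp only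
    by_cases h : (i.val = 0 ∧ j.val = 1) ∨ (i.val = 1 ∧ j.val = 0)
    · rw [if_pos h]; right; rfl
    · rw [if_neg h]; left; rfl


/-- The all-negative complete signed graph `(K_n, -)`. -/
def NegKn (n : ℕ) : SignedGraph n where
  G := ⊤
  sign := fun _ _ => -1
  sign_symm := fun _ _ => rfl
  sign_pm := fun _ _ _ => Or.inr rfl

/-- `Γ` is switching equivalent to `Γ'` (up to a relabelling of the vertices):
there is a bijection of the vertices matching the underlying graphs and a
`±1`-valued switching function `s` relating the two sign functions. -/
def SwitchingEquiv {n : ℕ} (Γ Γ' : SignedGraph n) : Prop :=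
  ∃ e : Fin n ≃ Fin n, ∃ s : Fin n → ℤ, (∀ i, s i = 1 ∨ s i = -1) ∧
    (∀ i j, Γ.G.Adj i j ↔ Γ'.G.Adj (e i) (e j)) ∧
    (∀ i j, Γ.G.Adj i j → Γ.sign i j = s i * Γ'.sign (e i) (e j) * s j)

/-!
Vertex `vᵢ` of the paper is `i - 1 : Fin n`.

The vector `(1, 1, n - 2, …, n - 2)` has Rayleigh quotient
`n - 3 + 2(n - 2)/(2 + (n - 2)³)` for `Γ₁`, which bounds `λ₁(Γ₁)` from below.

For `Γ₂`, an eigenvector with eigenvalue `λ > 2` takes equal values on `v₁, v₂` and on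
`v₃, v₄`; together with its sum over the clique `v₅, …, vₙ` it solves the eigenvalue equation
of the quotient matrix of the partition `{v₁, v₂}, {v₃, v₄}, {v₅, …, vₙ}`, nontrivially unless
the eigenvector vanishes. Hence `λ₁(Γ₂)`, if it were at least `λ₁(Γ₁)`, would be a root of the
characteristic cubic of that quotient matrix, which is positive beyond `n - 3` for `n ≥ 6` and
beyond `11/5` for `n = 5`.
-/

open Matrix

section Spectrum

variable {ι : Type*} [Fintype ι] [DecidableEq ι]

theorem Matrix.exists_mulVec_eq_smul_of_mem_spectrum {K : Type*} [Field K] {A : Matrix ι ι K}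
    {μ : K} (hμ : μ ∈ spectrum K A) : ∃ x ≠ 0, A *ᵥ x = μ • x := by
  rw [← Matrix.spectrum_toLin', ← Module.End.hasEigenvalue_iff_mem_spectrum] at hμ
  obtain ⟨x, hx⟩ := hμ.exists_hasEigenvector
  exact ⟨x, hx.2, by simpa using hx.apply_eq_smul⟩

namespace Matrix.IsHermitian

variable {A : Matrix ι ι ℝ}

theorem sSup_spectrum_mem [Nonempty ι] (hA : A.IsHermitian) :
    sSup (spectrum ℝ A) ∈ spectrum ℝ A :=
  Set.Nonempty.csSup_mem ⟨_, hA.eigenvalues_mem_spectrum_real (Classical.arbitrary ι)⟩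
    finite_real_spectrum

theorem dotProduct_mulVec_le_sSup_spectrum_mul (hA : A.IsHermitian) (x : ι → ℝ) :
    x ⬝ᵥ (A *ᵥ x) ≤ sSup (spectrum ℝ A) * (x ⬝ᵥ x) := by
  have hpsd : (algebraMap ℝ _ (sSup (spectrum ℝ A)) - A).PosSemidef := by
    refine posSemidef_iff_isHermitian_and_spectrum_nonneg.mpr ⟨?_, ?_⟩
    · exact (IsSelfAdjoint.algebraMap _ (.all _)).sub hA
    · rw [← spectrum.singleton_sub_eq]
      rintro _ ⟨_, rfl, μ, hμ, rfl⟩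
      exact sub_nonneg.2 (le_csSup finite_real_spectrum.bddAbove hμ)
  have := hpsd.dotProduct_mulVec_nonneg x
  rw [sub_mulVec, dotProduct_sub, Algebra.algebraMap_eq_smul_one, smul_mulVec, one_mulVec,
    dotProduct_smul, smul_eq_mul] at this
  simpa using this

end Matrix.IsHermitian

end Spectrum

namespace SignedGraph

variable {n : ℕ}

theorem adjMatrix_isHermitian (Γ : SignedGraph n) : Γ.adjMatrix.IsHermitian := by
  ext i j
  simp only [conjTranspose_apply, adjMatrix, star_trivial, Γ.sign_symm j i]
  rw [Γ.G.adj_comm j i]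

theorem lambda1_mem_spectrum [NeZero n] (Γ : SignedGraph n) :
    Γ.lambda1 ∈ spectrum ℝ Γ.adjMatrix :=
  Γ.adjMatrix_isHermitian.sSup_spectrum_mem

end SignedGraph

namespace Gamma1

variable {k : ℕ} (x : Fin (3 + k) → ℝ)

theorem adjMatrix_mulVec_zero : ((Gamma1 (3 + k)).adjMatrix *ᵥ x) (Fin.castAdd k 0) =
    -x (Fin.castAdd k 1) + x (Fin.castAdd k 2) := by
  simp only [mulVec, dotProduct, Fin.sum_univ_add, Fin.sum_univ_three, SignedGraph.adjMatrix,
    Gamma1, ne_eq, Fin.ext_iff, Fin.val_castAdd, Fin.val_natAdd]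
  simp +arith

theorem adjMatrix_mulVec_one : ((Gamma1 (3 + k)).adjMatrix *ᵥ x) (Fin.castAdd k 1) =
    -x (Fin.castAdd k 0) + x (Fin.castAdd k 2) := by
  simp only [mulVec, dotProduct, Fin.sum_univ_add, Fin.sum_univ_three, SignedGraph.adjMatrix,
    Gamma1, ne_eq, Fin.ext_iff, Fin.val_castAdd, Fin.val_natAdd]
  simp +arith

theorem adjMatrix_mulVec_two : ((Gamma1 (3 + k)).adjMatrix *ᵥ x) (Fin.castAdd k 2) =
    x (Fin.castAdd k 0) + x (Fin.castAdd k 1) + ∑ j, x (Fin.natAdd 3 j) := by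
  simp only [mulVec, dotProduct, Fin.sum_univ_add, Fin.sum_univ_three, SignedGraph.adjMatrix,
    Gamma1, ne_eq, Fin.ext_iff, Fin.val_castAdd, Fin.val_natAdd]
  simp +arith

theorem adjMatrix_mulVec_natAdd (i : Fin k) :
    ((Gamma1 (3 + k)).adjMatrix *ᵥ x) (Fin.natAdd 3 i) =
      x (Fin.castAdd k 2) + (∑ j, x (Fin.natAdd 3 j) - x (Fin.natAdd 3 i)) := by
  simp only [mulVec, dotProduct, Fin.sum_univ_add, Fin.sum_univ_three, SignedGraph.adjMatrix,
    Gamma1, ne_eq, Fin.ext_iff, Fin.val_castAdd, Fin.val_natAdd]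
  simp +arith [Fin.val_inj, Finset.sum_ite, Finset.filter_ne, Finset.sum_erase_eq_sub]

theorem le_lambda1 {n : ℕ} (hn : 3 ≤ n) :
    (n : ℝ) - 3 + 2 * ((n : ℝ) - 2) / (2 + ((n : ℝ) - 2) ^ 3) ≤ (Gamma1 n).lambda1 := by
  obtain ⟨k, rfl⟩ := Nat.exists_eq_add_of_le hn
  set c : ℝ := k + 1
  set y : Fin (3 + k) → ℝ := Fin.append ![1, 1, c] fun _ => c
  have hyy : y ⬝ᵥ y = 2 + (k + 1) * c ^ 2 := by
    simp only [y, dotProduct, Fin.sum_univ_add, Fin.append_left, Fin.append_right,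
      Fin.sum_univ_three, cons_val_zero, cons_val_one, cons_val, mul_one, Finset.sum_const,
      Finset.card_univ, Fintype.card_fin, nsmul_eq_mul]
    ring
  have hyAy : y ⬝ᵥ ((Gamma1 (3 + k)).adjMatrix *ᵥ y) = 4 * c - 2 + k * (k + 1) * c ^ 2 := by
    simp only [y, dotProduct, Fin.sum_univ_add, Fin.append_left, Fin.append_right,
      Fin.sum_univ_three, cons_val_zero, cons_val_one, cons_val, one_mul, adjMatrix_mulVec_zero,
      adjMatrix_mulVec_one, adjMatrix_mulVec_two, adjMatrix_mulVec_natAdd, add_sub_cancel,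
      Finset.sum_const, Finset.card_univ, Fintype.card_fin, nsmul_eq_mul]
    ring
  have hray :
      y ⬝ᵥ ((Gamma1 (3 + k)).adjMatrix *ᵥ y) ≤ (Gamma1 (3 + k)).lambda1 * (y ⬝ᵥ y) :=
    (Gamma1 (3 + k)).adjMatrix_isHermitian.dotProduct_mulVec_le_sSup_spectrum_mul y
  rw [hyy, hyAy, ← div_le_iff₀ (by positivity)] at hray
  refine Eq.trans_le ?_ hray
  have hden : 2 + c ^ 3 ≠ 0 := by positivity
  rw [show ((3 + k : ℕ) : ℝ) - 2 = c by push_cast; ring,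
    show ((3 + k : ℕ) : ℝ) - 3 = k by push_cast; ring]
  field_simp
  ring

end Gamma1

namespace Gamma2

variable {k : ℕ} (x : Fin (4 + k) → ℝ)

theorem adjMatrix_mulVec_zero : ((Gamma2 (4 + k)).adjMatrix *ᵥ x) (Fin.castAdd k 0) =
    -x (Fin.castAdd k 1) + x (Fin.castAdd k 2) + x (Fin.castAdd k 3) := by
  simp only [mulVec, dotProduct, Fin.sum_univ_add, Fin.sum_univ_four, SignedGraph.adjMatrix,
    Gamma2, ne_eq, Fin.ext_iff, Fin.val_castAdd, Fin.val_natAdd]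
  simp +arith

theorem adjMatrix_mulVec_one : ((Gamma2 (4 + k)).adjMatrix *ᵥ x) (Fin.castAdd k 1) =
    -x (Fin.castAdd k 0) + x (Fin.castAdd k 2) + x (Fin.castAdd k 3) := by
  simp only [mulVec, dotProduct, Fin.sum_univ_add, Fin.sum_univ_four, SignedGraph.adjMatrix,
    Gamma2, ne_eq, Fin.ext_iff, Fin.val_castAdd, Fin.val_natAdd]
  simp +arith

theorem adjMatrix_mulVec_two : ((Gamma2 (4 + k)).adjMatrix *ᵥ x) (Fin.castAdd k 2) =
    x (Fin.castAdd k 0) + x (Fin.castAdd k 1) + ∑ j, x (Fin.natAdd 4 j) := by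
  simp only [mulVec, dotProduct, Fin.sum_univ_add, Fin.sum_univ_four, SignedGraph.adjMatrix,
    Gamma2, ne_eq, Fin.ext_iff, Fin.val_castAdd, Fin.val_natAdd]
  simp +arith

theorem adjMatrix_mulVec_three : ((Gamma2 (4 + k)).adjMatrix *ᵥ x) (Fin.castAdd k 3) =
    x (Fin.castAdd k 0) + x (Fin.castAdd k 1) + ∑ j, x (Fin.natAdd 4 j) := by
  simp only [mulVec, dotProduct, Fin.sum_univ_add, Fin.sum_univ_four, SignedGraph.adjMatrix,
    Gamma2, ne_eq, Fin.ext_iff, Fin.val_castAdd, Fin.val_natAdd]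
  simp +arith

theorem adjMatrix_mulVec_natAdd (i : Fin k) :
    ((Gamma2 (4 + k)).adjMatrix *ᵥ x) (Fin.natAdd 4 i) =
      x (Fin.castAdd k 2) + x (Fin.castAdd k 3) +
        (∑ j, x (Fin.natAdd 4 j) - x (Fin.natAdd 4 i)) := by
  simp only [mulVec, dotProduct, Fin.sum_univ_add, Fin.sum_univ_four, SignedGraph.adjMatrix,
    Gamma2, ne_eq, Fin.ext_iff, Fin.val_castAdd, Fin.val_natAdd]
  simp +arith [Fin.val_inj, Finset.sum_ite, Finset.filter_ne, Finset.sum_erase_eq_sub]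

/-- The characteristic polynomial, evaluated at `l`, of the quotient matrix
`!![-1, 2, 0; 2, 0, m; 0, 2, m - 1]` of the equitable partition
`{v₁, v₂}, {v₃, v₄}, {v₅, …, vₙ}` of `Γ₂`, where `m = n - 4`. -/
def quotientCharpoly (m l : ℝ) : ℝ :=
  l * (l + 1) * (l + 1 - m) - 4 * (l + 1 - m) - 2 * m * (l + 1)

theorem quotient_equations_of_mulVec_eq_smul {k : ℕ} {x : Fin (4 + k) → ℝ} {l : ℝ}
    (hx : (Gamma2 (4 + k)).adjMatrix *ᵥ x = l • x) (hl : 1 < l) :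
    x (Fin.castAdd k 0) = x (Fin.castAdd k 1) ∧ x (Fin.castAdd k 2) = x (Fin.castAdd k 3) ∧
      (l + 1) * x (Fin.castAdd k 0) = 2 * x (Fin.castAdd k 2) ∧
      l * x (Fin.castAdd k 2) = 2 * x (Fin.castAdd k 0) + ∑ j, x (Fin.natAdd 4 j) ∧
      (l + 1 - k) * ∑ j, x (Fin.natAdd 4 j) = 2 * k * x (Fin.castAdd k 2) := by
  have hrow (i : Fin (4 + k)) : ((Gamma2 (4 + k)).adjMatrix *ᵥ x) i = l * x i := congrFun hx i
  have e0 := (hrow _).symm.trans (adjMatrix_mulVec_zero x)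
  have e1 := (hrow _).symm.trans (adjMatrix_mulVec_one x)
  have e2 := (hrow _).symm.trans (adjMatrix_mulVec_two x)
  have e3 := (hrow _).symm.trans (adjMatrix_mulVec_three x)
  have etail (i : Fin k) := (hrow _).symm.trans (adjMatrix_mulVec_natAdd x i)
  set T := ∑ j, x (Fin.natAdd 4 j)
  have h01 : x (Fin.castAdd k 0) = x (Fin.castAdd k 1) := by
    have : (l - 1) * (x (Fin.castAdd k 0) - x (Fin.castAdd k 1)) = 0 := by
      linear_combination e0 - e1
    linarith [(mul_eq_zero.1 this).resolve_left (by linarith)]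
  have h23 : x (Fin.castAdd k 2) = x (Fin.castAdd k 3) :=
    mul_left_cancel₀ (by linarith : l ≠ 0) (e2.trans e3.symm)
  have hT : (l + 1 - k) * T = 2 * k * x (Fin.castAdd k 2) := by
    have hsum : l * T = ∑ i : Fin k,
        (x (Fin.castAdd k 2) + x (Fin.castAdd k 3) + (T - x (Fin.natAdd 4 i))) := by
      rw [Finset.mul_sum]
      exact Finset.sum_congr rfl fun i _ => etail i
    simp only [Finset.sum_add_distrib, Finset.sum_sub_distrib, Finset.sum_const,
      Finset.card_univ, Fintype.card_fin, nsmul_eq_mul, ← h23] at hsum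
    linarith
  exact ⟨h01, h23, by linear_combination e0 + h01 - h23, by linear_combination e2 - h01, hT⟩

theorem quotientCharpoly_eq_zero {n : ℕ} (hn : 4 ≤ n) {l : ℝ}
    (hl : l ∈ spectrum ℝ (Gamma2 n).adjMatrix) (h2 : 2 < l) (hm : (n : ℝ) - 4 < l + 1) :
    quotientCharpoly (n - 4) l = 0 := by
  obtain ⟨k, rfl⟩ := Nat.exists_eq_add_of_le hn
  rw [show ((4 + k : ℕ) : ℝ) - 4 = k by push_cast; ring] at hm ⊢
  obtain ⟨x, hx0, hx⟩ := Matrix.exists_mulVec_eq_smul_of_mem_spectrum hl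
  obtain ⟨h01, h23, ha, hc, hT⟩ := quotient_equations_of_mulVec_eq_smul hx (by linarith)
  have hcubic : quotientCharpoly k l * x (Fin.castAdd k 2) = 0 := by
    unfold quotientCharpoly
    linear_combination (l + 1) * (l + 1 - k) * hc + 2 * (l + 1 - k) * ha + (l + 1) * hT
  refine (mul_eq_zero.1 hcubic).resolve_right fun hc0 => hx0 ?_
  have ha0 : x (Fin.castAdd k 0) = 0 := by
    rw [hc0, mul_zero] at ha
    exact (mul_eq_zero.1 ha).resolve_left (by linarith)
  have hT0 : ∑ j, x (Fin.natAdd 4 j) = 0 := by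
    rw [hc0, mul_zero] at hT
    exact (mul_eq_zero.1 hT).resolve_left (by linarith)
  funext i
  refine Fin.addCases (fun j => ?_) (fun j => ?_) i
  · fin_cases j
    exacts [ha0, h01 ▸ ha0, hc0, h23 ▸ hc0]
  · have hrow : l * x (Fin.natAdd 4 j) = _ :=
      (congrFun hx _).symm.trans (adjMatrix_mulVec_natAdd x j)
    rw [← h23, hc0, hT0] at hrow
    have : (l + 1) * x (Fin.natAdd 4 j) = 0 := by linarith
    exact (mul_eq_zero.1 this).resolve_left (by linarith)

theorem quotientCharpoly_pos {m l : ℝ} (hm : 2 ≤ m) (hl : m + 1 < l) :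
    0 < quotientCharpoly m l := by
  obtain ⟨d, hd, rfl⟩ : ∃ d, 0 < d ∧ l = m + 1 + d :=
    ⟨l - (m + 1), by linarith, by ring⟩
  have hexpand : quotientCharpoly m (m + 1 + d) =
      (2 * m - 4) + d * (m ^ 2 + 5 * m + 4) + d ^ 2 * (2 * m + 5) + d ^ 3 := by
    unfold quotientCharpoly
    ring
  have h1 : 0 < d * (m ^ 2 + 5 * m + 4) := mul_pos hd (by nlinarith)
  have h2 : 0 < d ^ 2 * (2 * m + 5) := mul_pos (by positivity) (by linarith)
  have h3 : 0 < d ^ 3 := by positivity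
  linarith

theorem quotientCharpoly_one_pos {l : ℝ} (hl : 11 / 5 < l) : 0 < quotientCharpoly 1 l := by
  unfold quotientCharpoly
  nlinarith [mul_pos (sub_pos.2 hl) (sub_pos.2 hl)]

end Gamma2

theorem lambda1_Gamma2_lt_lambda1_Gamma1 (n : ℕ) (hn : 5 ≤ n) :
    (Gamma2 n).lambda1 < (Gamma1 n).lambda1 := by
  have : NeZero n := ⟨by omega⟩
  have hn' : (5 : ℝ) ≤ n := by exact_mod_cast hn
  have hgap : 0 < 2 * ((n : ℝ) - 2) / (2 + ((n : ℝ) - 2) ^ 3) := by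
    have : (0 : ℝ) < n - 2 := by linarith
    positivity
  have hΓ1 := Gamma1.le_lambda1 (by omega : 3 ≤ n)
  by_contra! hle
  have hroot := Gamma2.quotientCharpoly_eq_zero (by omega) (Gamma2 n).lambda1_mem_spectrum
    (by linarith) (by linarith)
  rcases hn.eq_or_lt with rfl | hn6
  · norm_num at hΓ1 hroot
    exact (Gamma2.quotientCharpoly_one_pos (by linarith)).ne' hroot
  · have : (6 : ℝ) ≤ n := by exact_mod_cast hn6
    exact (Gamma2.quotientCharpoly_pos (by linarith) (by linarith)).ne' hroot
end

section
/- For every n ≥ 7, the adjacency matrix A(Γ2) of the signed graph Γ2 of order n has −1 as an eigenvalue with multiplicity exactly n − 5, and has 0 as an eigenvalue (with multiplicity at least 1). -/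
/-!
Write `A = A(Γ₂)`; the Lean vertex `i` is the paper's `vᵢ₊₁`. The twins `v₃, v₄` give `A` two
equal columns, so `det A = 0`. The clique vertices `v₅, …, vₙ` all have the same neighbours
`v₃, v₄` outside the clique; subtracting the `v₅`-coordinate from the other clique coordinates,
i.e. conjugating by a unipotent block matrix, makes `A` block lower triangular with diagonal
blocks `-I` of size `n - 5` and a `5 × 5` matrix whose characteristic polynomial takes the value
`8 (n - 4) ≠ 0` at `-1`.
-/

open scoped BigOperators

open Matrix Polynomial

namespace Matrix

variable {m o R : Type*} [Fintype m] [Fintype o] [DecidableEq m] [DecidableEq o] [CommRing R]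

/-- Conjugating by `fromBlocks 1 U 0 1` clears the upper right block exactly when `h` holds. -/
theorem charpoly_fromBlocks_of_mul_add_eq
    {A₁₁ : Matrix m m R} {A₁₂ : Matrix m o R} {A₂₁ : Matrix o m R} {A₂₂ : Matrix o o R}
    (U : Matrix m o R) (h : A₁₁ * U + A₁₂ = U * (A₂₁ * U + A₂₂)) :
    (fromBlocks A₁₁ A₁₂ A₂₁ A₂₂).charpoly =
      (A₁₁ - U * A₂₁).charpoly * (A₂₁ * U + A₂₂).charpoly := by
  let P : Matrix (m ⊕ o) (m ⊕ o) R := fromBlocks 1 U 0 1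
  let Q : Matrix (m ⊕ o) (m ⊕ o) R := fromBlocks 1 (-U) 0 1
  have hPQ : P * Q = 1 := by simp [P, Q, fromBlocks_multiply, fromBlocks_one]
  have hconj : Q * (fromBlocks A₁₁ A₁₂ A₂₁ A₂₂ * P) =
      fromBlocks (A₁₁ - U * A₂₁) 0 A₂₁ (A₂₁ * U + A₂₂) := by
    simp only [P, Q, fromBlocks_multiply, Matrix.one_mul, Matrix.mul_one, Matrix.zero_mul,
      Matrix.mul_zero, add_zero, zero_add, Matrix.neg_mul, h]
    rw [← sub_eq_add_neg, ← sub_eq_add_neg, sub_self]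
  rw [← charpoly_fromBlocks_zero₁₂, ← hconj, charpoly_mul_comm, Matrix.mul_assoc, hPQ,
    Matrix.mul_one]

theorem isRoot_charpoly_zero_of_det_eq_zero {A : Matrix m m R} (h : A.det = 0) :
    A.charpoly.IsRoot 0 := by
  rw [IsRoot, ← coeff_zero_eq_eval_zero]
  rw [det_eq_sign_charpoly_coeff] at h
  simpa using h

theorem charpoly_neg_one : (-1 : Matrix m m R).charpoly = (X + 1) ^ Fintype.card m := by
  rw [← diagonal_one, diagonal_neg, charpoly_diagonal, Finset.prod_const, Finset.card_univ]
  simp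

end Matrix

namespace Gamma2

lemma adjMatrix_apply {n : ℕ} (i j : Fin n) :
    (Gamma2 n).adjMatrix i j =
      if i.val ≠ j.val ∧
        ((i.val ≤ 1 ∧ j.val ≤ 3) ∨ (j.val ≤ 1 ∧ i.val ≤ 3) ∨
         (2 ≤ i.val ∧ i.val ≤ 3 ∧ 4 ≤ j.val) ∨ (2 ≤ j.val ∧ j.val ≤ 3 ∧ 4 ≤ i.val) ∨
         (4 ≤ i.val ∧ 4 ≤ j.val))
      then (if (i.val = 0 ∧ j.val = 1) ∨ (i.val = 1 ∧ j.val = 0) then -1 else 1)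
      else 0 := by
  simp only [SignedGraph.adjMatrix, Gamma2, Ne, Fin.ext_iff]
  split_ifs <;> norm_num

lemma adjMatrix_col_two_eq_col_three {n : ℕ} (hn : 4 ≤ n) (i : Fin n) :
    (Gamma2 n).adjMatrix i ⟨2, by omega⟩ = (Gamma2 n).adjMatrix i ⟨3, by omega⟩ := by
  simp only [adjMatrix_apply]
  split_ifs <;> first | rfl | (norm_num at * <;> omega)

lemma det_adjMatrix_eq_zero {n : ℕ} (hn : 4 ≤ n) : (Gamma2 n).adjMatrix.det = 0 :=
  det_zero_of_column_eq (by simp [Fin.ext_iff]) (adjMatrix_col_two_eq_col_three hn)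

def core : Matrix (Fin 5) (Fin 5) ℝ :=
  !![0, -1, 1, 1, 0; -1, 0, 1, 1, 0; 1, 1, 0, 0, 1; 1, 1, 0, 0, 1; 0, 0, 1, 1, 0]

def toClique (k : ℕ) : Matrix (Fin 5) (Fin k) ℝ := of fun i _ => ![0, 0, 1, 1, 1] i

lemma reindex_adjMatrix (k : ℕ) :
    reindex finSumFinEquiv.symm finSumFinEquiv.symm (Gamma2 (5 + k)).adjMatrix =
      fromBlocks core (toClique k) (toClique k)ᵀ (of (fun _ _ => 1) - 1) := by
  ext (i | i) (j | j)
  · simp only [reindex_apply, submatrix_apply, Equiv.symm_symm, finSumFinEquiv_apply_left,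
      fromBlocks_apply₁₁, adjMatrix_apply, Fin.val_castAdd]
    fin_cases i <;> fin_cases j <;> norm_num [core]
  · simp only [reindex_apply, submatrix_apply, Equiv.symm_symm, finSumFinEquiv_apply_left,
      finSumFinEquiv_apply_right, fromBlocks_apply₁₂, adjMatrix_apply, Fin.val_castAdd,
      Fin.val_natAdd, toClique, of_apply]
    fin_cases i <;> simp <;> omega
  · simp only [reindex_apply, submatrix_apply, Equiv.symm_symm, finSumFinEquiv_apply_left,
      finSumFinEquiv_apply_right, fromBlocks_apply₂₁, adjMatrix_apply, Fin.val_castAdd,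
      Fin.val_natAdd, transpose_apply, toClique, of_apply]
    fin_cases j <;> simp <;> omega
  · simp only [reindex_apply, submatrix_apply, Equiv.symm_symm, finSumFinEquiv_apply_right,
      fromBlocks_apply₂₂, adjMatrix_apply, Fin.val_natAdd, Matrix.sub_apply, of_apply,
      one_apply, Fin.ext_iff]
    split_ifs <;> first | omega | norm_num

def shift (k : ℕ) : Matrix (Fin 5) (Fin k) ℝ := of fun i _ => if i = 4 then -1 else 0

lemma toClique_transpose_mul_shift (k : ℕ) :
    (toClique k)ᵀ * shift k = -of fun _ _ => 1 := by
  ext i j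
  simp [toClique, shift, mul_apply]

lemma toClique_transpose_mul_shift_add (k : ℕ) :
    (toClique k)ᵀ * shift k + (of (fun _ _ => 1) - 1) = -1 := by
  rw [toClique_transpose_mul_shift]
  abel

lemma core_mul_shift_add_toClique (k : ℕ) :
    core * shift k + toClique k =
      shift k * ((toClique k)ᵀ * shift k + (of (fun _ _ => 1) - 1)) := by
  rw [toClique_transpose_mul_shift_add, Matrix.mul_neg, Matrix.mul_one]
  ext i j
  simp only [Matrix.add_apply, Matrix.neg_apply, mul_apply, Fin.sum_univ_five, shift,
    toClique, of_apply]
  fin_cases i <;> simp [core]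

/-- The transpose of the quotient matrix of the equitable partition
`{v₁}, {v₂}, {v₃}, {v₄}, {v₅, …, vₙ}`. -/
def reduced (k : ℕ) : Matrix (Fin 5) (Fin 5) ℝ :=
  !![0, -1, 1, 1, 0; -1, 0, 1, 1, 0; 1, 1, 0, 0, 1; 1, 1, 0, 0, 1; 0, 0, k + 1, k + 1, k]

lemma core_sub_shift_mul_toClique_transpose (k : ℕ) :
    core - shift k * (toClique k)ᵀ = reduced k := by
  ext i j
  fin_cases i <;> fin_cases j <;> simp [core, reduced, toClique, shift, mul_apply, add_comm]

lemma eval_neg_one_charpoly_reduced (k : ℕ) : (reduced k).charpoly.eval (-1) = 8 * (k + 1) := by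
  rw [eval_charpoly, reduced]
  simp [det_succ_row_zero, Fin.sum_univ_succ, Fin.succAbove]
  ring

lemma charpoly_adjMatrix (k : ℕ) :
    (Gamma2 (5 + k)).adjMatrix.charpoly = (reduced k).charpoly * (X - C (-1)) ^ k := by
  rw [← charpoly_reindex finSumFinEquiv.symm, reindex_adjMatrix,
    charpoly_fromBlocks_of_mul_add_eq _ (core_mul_shift_add_toClique k),
    core_sub_shift_mul_toClique_transpose, toClique_transpose_mul_shift_add, charpoly_neg_one,
    Fintype.card_fin, map_neg, C_1, sub_neg_eq_add]

end Gamma2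

theorem Gamma2_eigenvalue_multiplicities (n : ℕ) (hn : 7 ≤ n) :
    Polynomial.rootMultiplicity (-1) ((Gamma2 n).adjMatrix.charpoly) = n - 5 ∧
      1 ≤ Polynomial.rootMultiplicity 0 ((Gamma2 n).adjMatrix.charpoly) := by
  have hne : (Gamma2 n).adjMatrix.charpoly ≠ 0 := (charpoly_monic _).ne_zero
  refine ⟨?_, (rootMultiplicity_pos hne).2
    (isRoot_charpoly_zero_of_det_eq_zero (Gamma2.det_adjMatrix_eq_zero (by omega)))⟩
  obtain ⟨k, rfl⟩ : ∃ k, n = 5 + k := ⟨n - 5, by omega⟩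
  have hreduced : ¬(Gamma2.reduced k).charpoly.IsRoot (-1) := by
    rw [IsRoot, Gamma2.eval_neg_one_charpoly_reduced]
    positivity
  rw [Gamma2.charpoly_adjMatrix, rootMultiplicity_mul_X_sub_C_pow (charpoly_monic _).ne_zero,
    rootMultiplicity_eq_zero hreduced]
  omega
end

section
/- Let n ≥ 6 and let Γ' be a signed graph of order n that attains the maximum largest eigenvalue λ1 among all unbalanced, negative-C4-free signed graphs of order n, and suppose A(Γ') has a nonnegative unit eigenvector corresponding to λ1(Γ'). Then Γ' contains exactly one negative edge. -/
open scoped BigOperators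

/-!
Let `x` be the nonnegative unit eigenvector. If a competitor `Γ` (unbalanced and
negative-`C₄`-free) satisfies `x ⬝ A(Γ) x ≥ λ₁(Γ')`, then the Rayleigh bound and the
maximality of `λ₁(Γ')` force `A(Γ) x = λ₁(Γ') x`. Grafting a negative triangle at two zeros
`a, b` of `x` onto the complete graph on the other vertices gives such a competitor whose
row `a` reads `x c = 0` for a vertex with `x c > 0`, so `x` vanishes at most once. A competitor
whose adjacency matrix is entrywise at least `A(Γ')` and larger at `(a, b)` has both
eigen-equations, and comparing rows `a` and `b` gives `x a = x b = 0`; so no such competitor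
exists. Deleting a negative edge `ab` gives one, hence `Γ' - ab` is balanced: `ab` lies on
every negative cycle and every cycle through `ab` is negative, in particular no `4`-cycle passes
through `ab`. Making two negative edges positive would then give one too.
-/

namespace Matrix

lemma algebraMap_sub_mulVec {ι R : Type*} [Fintype ι] [DecidableEq ι] [CommRing R] (r : R)
    (A : Matrix ι ι R) (x : ι → R) :
    (algebraMap R (Matrix ι ι R) r - A) *ᵥ x = r • x - A *ᵥ x := by
  rw [sub_mulVec, Algebra.algebraMap_eq_smul_one, smul_mulVec, one_mulVec]

namespace IsHermitian

variable {ι : Type*} [Fintype ι] [DecidableEq ι] {A : Matrix ι ι ℝ} {r : ℝ}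

lemma posSemidef_algebraMap_sub (hA : A.IsHermitian) (h : ∀ μ ∈ spectrum ℝ A, μ ≤ r) :
    (algebraMap ℝ (Matrix ι ι ℝ) r - A).PosSemidef := by
  have hB : (algebraMap ℝ (Matrix ι ι ℝ) r - A).IsHermitian :=
    (isHermitian_diagonal fun _ => r).sub hA
  refine hB.posSemidef_iff_eigenvalues_nonneg.mpr fun i => ?_
  obtain ⟨_, rfl, μ, hμ, hi⟩ :=
    (spectrum.singleton_sub_eq A r).symm ▸ hB.eigenvalues_mem_spectrum_real i
  rw [← hi]
  exact sub_nonneg.mpr (h μ hμ)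

lemma dotProduct_mulVec_le (hA : A.IsHermitian) (h : ∀ μ ∈ spectrum ℝ A, μ ≤ r)
    (x : ι → ℝ) : x ⬝ᵥ A *ᵥ x ≤ r * (x ⬝ᵥ x) := by
  have := (hA.posSemidef_algebraMap_sub h).dotProduct_mulVec_nonneg x
  rw [algebraMap_sub_mulVec, dotProduct_sub, dotProduct_smul, star_trivial] at this
  simpa [sub_nonneg] using this

lemma mulVec_eq_smul_of_dotProduct_mulVec_eq (hA : A.IsHermitian)
    (h : ∀ μ ∈ spectrum ℝ A, μ ≤ r) {x : ι → ℝ}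
    (hx : x ⬝ᵥ A *ᵥ x = r * (x ⬝ᵥ x)) : A *ᵥ x = r • x := by
  have hzero := ((hA.posSemidef_algebraMap_sub h).dotProduct_mulVec_zero_iff x).mp (by
    rw [algebraMap_sub_mulVec, dotProduct_sub, dotProduct_smul, star_trivial, hx, smul_eq_mul,
      sub_self])
  rw [algebraMap_sub_mulVec, sub_eq_zero] at hzero
  exact hzero.symm

end IsHermitian

variable {ι : Type*} [Fintype ι] {A B : Matrix ι ι ℝ} {x : ι → ℝ}

lemma dotProduct_mulVec_mono (hx : ∀ i, 0 ≤ x i)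
    (h : ∀ i j, x i ≠ 0 → x j ≠ 0 → A i j ≤ B i j) :
    x ⬝ᵥ A *ᵥ x ≤ x ⬝ᵥ B *ᵥ x := by
  simp only [dotProduct, mulVec, Finset.mul_sum]
  refine Finset.sum_le_sum fun i _ => Finset.sum_le_sum fun j _ => ?_
  rcases eq_or_ne (x i) 0 with hi | hi
  · simp [hi]
  rcases eq_or_ne (x j) 0 with hj | hj
  · simp [hj]
  exact mul_le_mul_of_nonneg_left (mul_le_mul_of_nonneg_right (h i j hi hj) (hx j)) (hx i)

lemma eq_zero_of_mulVec_apply_eq (hx : ∀ i, 0 ≤ x i) {a b : ι} (hle : ∀ j, A a j ≤ B a j)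
    (hlt : A a b < B a b) (heq : (A *ᵥ x) a = (B *ᵥ x) a) : x b = 0 := by
  have hsum : ∑ j, (B a j - A a j) * x j = 0 := by
    simp only [mulVec, dotProduct] at heq
    simp only [sub_mul, Finset.sum_sub_distrib, heq, sub_self]
  have hterm := (Finset.sum_eq_zero_iff_of_nonneg fun j _ =>
    mul_nonneg (sub_nonneg.mpr (hle j)) (hx j)).mp hsum b (Finset.mem_univ b)
  exact (mul_eq_zero.mp hterm).resolve_left (sub_ne_zero.mpr hlt.ne')

end Matrix

lemma List.Nodup.countP_mem_eq_card {α : Type*} [DecidableEq α] {l : List α} (hl : l.Nodup)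
    {F : Finset α} (hF : ∀ x ∈ F, x ∈ l) : l.countP (· ∈ F) = F.card := by
  rw [List.countP_eq_length_filter, ← List.toFinset_card_of_nodup (hl.filter _),
    List.toFinset_filter]
  simp only [decide_eq_true_eq]
  rw [Finset.filter_mem_eq_inter, Finset.inter_eq_right.mpr]
  exact fun x hx => List.mem_toFinset.mpr (hF x hx)

lemma SimpleGraph.Walk.exists_eq_append_cons_of_mem_edges {V : Type*} {G : SimpleGraph V}
    {u v : V} {e : Sym2 V} (p : G.Walk u v) (he : e ∈ p.edges) :
    ∃ (x y : V) (h : G.Adj x y) (p₁ : G.Walk u x) (p₂ : G.Walk y v),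
      s(x, y) = e ∧ p = p₁.append (cons h p₂) := by
  induction p with
  | nil => simp at he
  | cons h q ih =>
    rcases List.mem_cons.mp he with rfl | he
    · exact ⟨_, _, h, nil, q, rfl, rfl⟩
    · obtain ⟨x, y, h', p₁, p₂, hxy, rfl⟩ := ih he
      exact ⟨x, y, h', cons h p₁, p₂, hxy, rfl⟩

namespace SignedGraph

open Matrix SimpleGraph

variable {n : ℕ}

section Basic

variable (Γ : SignedGraph n)

lemma adjMatrix_of_adj {i j : Fin n} (h : Γ.G.Adj i j) : Γ.adjMatrix i j = Γ.sign i j := by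
  simp [adjMatrix, h]

lemma adjMatrix_of_not_adj {i j : Fin n} (h : ¬ Γ.G.Adj i j) : Γ.adjMatrix i j = 0 := by
  simp [adjMatrix, h]

lemma adjMatrix_self (i : Fin n) : Γ.adjMatrix i i = 0 :=
  Γ.adjMatrix_of_not_adj (Γ.G.loopless.irrefl i)

lemma adjMatrix_comm (i j : Fin n) : Γ.adjMatrix i j = Γ.adjMatrix j i := by
  by_cases h : Γ.G.Adj i j
  · rw [Γ.adjMatrix_of_adj h, Γ.adjMatrix_of_adj h.symm, Γ.sign_symm]
  · rw [Γ.adjMatrix_of_not_adj h, Γ.adjMatrix_of_not_adj (mt Γ.G.adj_symm h)]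

lemma adjMatrix_le_one (i j : Fin n) : Γ.adjMatrix i j ≤ 1 := by
  by_cases h : Γ.G.Adj i j
  · rcases Γ.sign_pm i j h with hs | hs <;> simp [Γ.adjMatrix_of_adj h, hs]
  · simp [Γ.adjMatrix_of_not_adj h]

lemma isHermitian_adjMatrix : Γ.adjMatrix.IsHermitian :=
  Matrix.IsHermitian.ext fun i j => by simpa using Γ.adjMatrix_comm j i

lemma le_lambda1 {μ : ℝ} (h : μ ∈ spectrum ℝ Γ.adjMatrix) : μ ≤ Γ.lambda1 :=
  le_csSup Matrix.finite_real_spectrum.bddAbove h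

lemma dotProduct_adjMatrix_mulVec_le (x : Fin n → ℝ) :
    x ⬝ᵥ Γ.adjMatrix *ᵥ x ≤ Γ.lambda1 * (x ⬝ᵥ x) :=
  Γ.isHermitian_adjMatrix.dotProduct_mulVec_le (fun _ => Γ.le_lambda1) x

lemma adjMatrix_mulVec_eq_of_dotProduct_eq {x : Fin n → ℝ}
    (hx : x ⬝ᵥ Γ.adjMatrix *ᵥ x = Γ.lambda1 * (x ⬝ᵥ x)) :
    Γ.adjMatrix *ᵥ x = Γ.lambda1 • x :=
  Γ.isHermitian_adjMatrix.mulVec_eq_smul_of_dotProduct_mulVec_eq (fun _ => Γ.le_lambda1) hx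

@[simp] lemma signEdge_mk (i j : Fin n) : Γ.signEdge s(i, j) = Γ.sign i j := rfl

lemma signEdge_eq_one_or_neg_one {e : Sym2 (Fin n)} (he : e ∈ Γ.G.edgeSet) :
    Γ.signEdge e = 1 ∨ Γ.signEdge e = -1 := by
  induction e with
  | _ i j => exact Γ.sign_pm i j he

@[simp] lemma walkSign_nil {v : Fin n} : Γ.walkSign (Walk.nil : Γ.G.Walk v v) = 1 := rfl

@[simp] lemma walkSign_cons {u v w : Fin n} (h : Γ.G.Adj u v) (p : Γ.G.Walk v w) :
    Γ.walkSign (Walk.cons h p) = Γ.sign u v * Γ.walkSign p := by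
  simp [walkSign]

@[simp] lemma walkSign_append {u v w : Fin n} (p : Γ.G.Walk u v) (q : Γ.G.Walk v w) :
    Γ.walkSign (p.append q) = Γ.walkSign p * Γ.walkSign q := by
  simp [walkSign, Walk.edges_append]

@[simp] lemma walkSign_reverse {u v : Fin n} (p : Γ.G.Walk u v) :
    Γ.walkSign p.reverse = Γ.walkSign p := by
  simp [walkSign, Walk.edges_reverse, List.prod_reverse]

lemma walkSign_eq_one_or_neg_one {u v : Fin n} (p : Γ.G.Walk u v) :
    Γ.walkSign p = 1 ∨ Γ.walkSign p = -1 := by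
  induction p with
  | nil => simp
  | cons h q ih =>
    rcases Γ.sign_pm _ _ h with h1 | h1 <;> rcases ih with h2 | h2 <;> simp [h1, h2]

lemma walkSign_mul_self {u v : Fin n} (p : Γ.G.Walk u v) : Γ.walkSign p * Γ.walkSign p = 1 := by
  rcases Γ.walkSign_eq_one_or_neg_one p with h | h <;> simp [h]

lemma exists_signEdge_eq_neg_one {u v : Fin n} (p : Γ.G.Walk u v) (hp : Γ.walkSign p = -1) :
    ∃ e ∈ p.edges, Γ.signEdge e = -1 := by
  by_contra! h
  refine absurd hp (ne_of_eq_of_ne (List.prod_eq_one fun s hs => ?_) (by decide))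
  obtain ⟨e, he, rfl⟩ := List.mem_map.mp hs
  exact (Γ.signEdge_eq_one_or_neg_one (p.edges_subset_edgeSet he)).resolve_right (h e he)

end Basic

section Balance

variable {Γ : SignedGraph n}

lemma walkSign_cons_eq_one_of_isPath (hb : ¬ Γ.Unbalanced) {u w : Fin n} (h : Γ.G.Adj u w)
    {q : Γ.G.Walk w u} (hq : q.IsPath) : Γ.walkSign (Walk.cons h q) = 1 := by
  by_cases he : s(u, w) ∈ q.edges
  · -- a path from `w` to `u` through the edge `uw` is that edge alone
    cases q with
    | nil => exact absurd h (Γ.G.loopless.irrefl u)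
    | @cons _ z _ h' q' =>
      rw [Walk.cons_isPath_iff] at hq
      rcases List.mem_cons.mp he with he | he
      · obtain rfl : z = u := by
          rcases Sym2.eq_iff.mp he with ⟨rfl, -⟩ | ⟨rfl, -⟩
          · exact absurd h (Γ.G.loopless.irrefl _)
          · rfl
        obtain rfl := Walk.eq_nil_iff_nil.mpr (Walk.isPath_iff_nil.mp hq.1)
        rcases Γ.sign_pm _ _ h with hs | hs <;> simp [hs, Γ.sign_symm w z]
      · exact absurd (q'.snd_mem_support_of_mem_edges he) hq.2
  · rcases Γ.walkSign_eq_one_or_neg_one (Walk.cons h q) with hs | hs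
    · exact hs
    · exact absurd ⟨u, _, (Walk.cons_isCycle_iff q h).mpr ⟨hq, he⟩, hs⟩ hb

lemma walkSign_bypass (hb : ¬ Γ.Unbalanced) {u v : Fin n} (p : Γ.G.Walk u v) :
    Γ.walkSign p.bypass = Γ.walkSign p := by
  induction p with
  | nil => rfl
  | @cons u w v h p ih =>
    rw [Walk.bypass]
    split_ifs with hu
    · -- `p.bypass` passes through `u`: its segment up to `u` closes up with `h`
      have hloop := walkSign_cons_eq_one_of_isPath hb h ((p.bypass_isPath).takeUntil hu)
      have hsplit := congrArg Γ.walkSign (p.bypass.take_spec hu)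
      rw [walkSign_append, ih] at hsplit
      rw [walkSign_cons] at hloop ⊢
      rw [← hsplit, ← mul_assoc, hloop, one_mul]
    · rw [walkSign_cons, walkSign_cons, ih]

lemma walkSign_eq_one_of_not_unbalanced (hb : ¬ Γ.Unbalanced) {v : Fin n} (c : Γ.G.Walk v v) :
    Γ.walkSign c = 1 := by
  rw [← walkSign_bypass hb, Walk.eq_nil_iff_nil.mpr (Walk.isPath_iff_nil.mp c.bypass_isPath),
    walkSign_nil]

lemma walkSign_eq_of_not_unbalanced (hb : ¬ Γ.Unbalanced) {u v : Fin n} (p q : Γ.G.Walk u v) :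
    Γ.walkSign p = Γ.walkSign q := by
  have h := walkSign_eq_one_of_not_unbalanced hb (p.append q.reverse)
  rw [walkSign_append, walkSign_reverse] at h
  calc Γ.walkSign p = Γ.walkSign p * (Γ.walkSign q * Γ.walkSign q) := by
        rw [Γ.walkSign_mul_self, mul_one]
    _ = Γ.walkSign q := by rw [← mul_assoc, h, one_mul]

lemma exists_walkSign_eq_of_mem_edges {u a b : Fin n} {c : Γ.G.Walk u u} (hc : c.edges.Nodup)
    (he : s(a, b) ∈ c.edges) :
    ∃ P : Γ.G.Walk b a, s(a, b) ∉ P.edges ∧ Γ.walkSign c = Γ.sign a b * Γ.walkSign P := by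
  obtain ⟨x, y, h, p₁, p₂, hxy, rfl⟩ := c.exists_eq_append_cons_of_mem_edges he
  rw [Walk.edges_append, Walk.edges_cons, List.nodup_append] at hc
  have hP : s(x, y) ∉ (p₂.append p₁).edges := by
    rw [Walk.edges_append, List.mem_append, not_or]
    exact ⟨(List.nodup_cons.mp hc.2.1).1, fun h₁ => hc.2.2 _ h₁ _ List.mem_cons_self rfl⟩
  have hsign : Γ.walkSign (p₁.append (Walk.cons h p₂)) =
      Γ.sign x y * Γ.walkSign (p₂.append p₁) := by
    simp only [walkSign_append, walkSign_cons]
    ring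
  rcases Sym2.eq_iff.mp hxy with ⟨rfl, rfl⟩ | ⟨rfl, rfl⟩
  · exact ⟨_, hP, hsign⟩
  · refine ⟨(p₂.append p₁).reverse, ?_, ?_⟩
    · rwa [Walk.edges_reverse, List.mem_reverse, Sym2.eq_swap]
    · rw [hsign, walkSign_reverse, Γ.sign_symm]

end Balance

def deleteEdges (Γ : SignedGraph n) (S : Set (Sym2 (Fin n))) : SignedGraph n where
  G := Γ.G.deleteEdges S
  sign := Γ.sign
  sign_symm := Γ.sign_symm
  sign_pm i j h := Γ.sign_pm i j (deleteEdges_adj.mp h).1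

section DeleteEdges

variable {Γ : SignedGraph n} {S : Set (Sym2 (Fin n))}

lemma walkSign_mapLe_deleteEdges {u v : Fin n} (p : (Γ.deleteEdges S).G.Walk u v) :
    Γ.walkSign (p.mapLe (Γ.G.deleteEdges_le S)) = (Γ.deleteEdges S).walkSign p :=
  congrArg (fun l : List (Sym2 (Fin n)) => (l.map Γ.signEdge).prod) (Walk.edges_mapLe_eq_edges _ p)

lemma walkSign_toDeleteEdges {u v : Fin n} (p : Γ.G.Walk u v) (hp : ∀ e ∈ p.edges, e ∉ S) :
    (Γ.deleteEdges S).walkSign (p.toDeleteEdges S hp) = Γ.walkSign p :=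
  congrArg (fun l : List (Sym2 (Fin n)) => (l.map Γ.signEdge).prod) (Walk.edges_transfer _ _)

lemma NegC4Free.deleteEdges (hfree : Γ.NegC4Free) : (Γ.deleteEdges S).NegC4Free := by
  intro u c hc hlen
  rw [← walkSign_mapLe_deleteEdges]
  exact hfree u _ ((Walk.isCycle_mapLe _).mpr hc) ((Walk.length_mapLe _ c).trans hlen)

lemma unbalanced_deleteEdges {u : Fin n} {c : Γ.G.Walk u u} (hc : Γ.IsNegCycle c)
    (hcs : ∀ e ∈ c.edges, e ∉ S) : (Γ.deleteEdges S).Unbalanced :=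
  ⟨u, c.toDeleteEdges S hcs, hc.1.transfer _, by rw [walkSign_toDeleteEdges, hc.2]⟩

lemma walkSign_eq_of_not_unbalanced_deleteEdges {a b : Fin n}
    (hb : ¬ (Γ.deleteEdges {s(a, b)}).Unbalanced) {u v : Fin n} {c : Γ.G.Walk u u}
    {c' : Γ.G.Walk v v} (hc : c.edges.Nodup) (hc' : c'.edges.Nodup) (he : s(a, b) ∈ c.edges)
    (he' : s(a, b) ∈ c'.edges) : Γ.walkSign c = Γ.walkSign c' := by
  obtain ⟨P, hP, hcP⟩ := exists_walkSign_eq_of_mem_edges hc he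
  obtain ⟨P', hP', hcP'⟩ := exists_walkSign_eq_of_mem_edges hc' he'
  have hPs : ∀ e ∈ P.edges, e ∉ ({s(a, b)} : Set _) := fun e he h => hP (h ▸ he)
  have hPs' : ∀ e ∈ P'.edges, e ∉ ({s(a, b)} : Set _) := fun e he h => hP' (h ▸ he)
  have := walkSign_eq_of_not_unbalanced hb (P.toDeleteEdges _ hPs) (P'.toDeleteEdges _ hPs')
  rw [walkSign_toDeleteEdges, walkSign_toDeleteEdges] at this
  rw [hcP, hcP', this]

lemma adjMatrix_deleteEdges_of_mem {i j : Fin n} (h : s(i, j) ∈ S) :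
    (Γ.deleteEdges S).adjMatrix i j = 0 :=
  adjMatrix_of_not_adj _ fun hadj => (deleteEdges_adj.mp hadj).2 h

lemma adjMatrix_le_adjMatrix_deleteEdges (hS : ∀ e ∈ S, Γ.signEdge e = -1) (i j : Fin n) :
    Γ.adjMatrix i j ≤ (Γ.deleteEdges S).adjMatrix i j := by
  by_cases hij : s(i, j) ∈ S
  · rw [adjMatrix_deleteEdges_of_mem hij]
    by_cases hadj : Γ.G.Adj i j
    · rw [Γ.adjMatrix_of_adj hadj, show Γ.sign i j = -1 from hS _ hij]
      norm_num
    · rw [Γ.adjMatrix_of_not_adj hadj]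
  · by_cases hadj : Γ.G.Adj i j
    · rw [Γ.adjMatrix_of_adj hadj,
        adjMatrix_of_adj (Γ.deleteEdges S) (deleteEdges_adj.mpr ⟨hadj, hij⟩)]
      rfl
    · rw [Γ.adjMatrix_of_not_adj hadj,
        adjMatrix_of_not_adj (Γ.deleteEdges S) fun h => hadj (deleteEdges_adj.mp h).1]

end DeleteEdges

def setPositive (Γ : SignedGraph n) (F : Finset (Sym2 (Fin n))) : SignedGraph n where
  G := Γ.G
  sign i j := if s(i, j) ∈ F then 1 else Γ.sign i j
  sign_symm i j := by rw [Sym2.eq_swap, Γ.sign_symm]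
  sign_pm i j h := by
    split_ifs
    · exact .inl rfl
    · exact Γ.sign_pm i j h

section SetPositive

variable {Γ : SignedGraph n} {F : Finset (Sym2 (Fin n))}

lemma adjMatrix_le_adjMatrix_setPositive (i j : Fin n) :
    Γ.adjMatrix i j ≤ (Γ.setPositive F).adjMatrix i j := by
  by_cases h : Γ.G.Adj i j
  · rw [Γ.adjMatrix_of_adj h, (Γ.setPositive F).adjMatrix_of_adj h]
    by_cases hF : s(i, j) ∈ F
    · simpa [setPositive, hF] using Γ.adjMatrix_of_adj h ▸ Γ.adjMatrix_le_one i j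
    · simp [setPositive, hF]
  · rw [Γ.adjMatrix_of_not_adj h, (Γ.setPositive F).adjMatrix_of_not_adj h]

lemma adjMatrix_setPositive_of_mem {a b : Fin n} (h : Γ.G.Adj a b) (hF : s(a, b) ∈ F) :
    (Γ.setPositive F).adjMatrix a b = 1 := by
  rw [(Γ.setPositive F).adjMatrix_of_adj h]
  simp [setPositive, hF]

lemma signEdge_setPositive (e : Sym2 (Fin n)) :
    (Γ.setPositive F).signEdge e = if e ∈ F then 1 else Γ.signEdge e := by
  induction e with
  | _ i j => rfl

lemma prod_map_signEdge_setPositive (hF : ∀ e ∈ F, Γ.signEdge e = -1)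
    (l : List (Sym2 (Fin n))) :
    (l.map (Γ.setPositive F).signEdge).prod =
      (l.map Γ.signEdge).prod * (-1) ^ l.countP (· ∈ F) := by
  induction l with
  | nil => simp
  | cons e l ih =>
    by_cases he : e ∈ F
    · simp [signEdge_setPositive, he, hF e he, ih, pow_succ]
    · simp [signEdge_setPositive, he, ih, mul_assoc]

lemma walkSign_setPositive (hF : ∀ e ∈ F, Γ.signEdge e = -1) {u v : Fin n}
    (p : Γ.G.Walk u v) :
    (Γ.setPositive F).walkSign p = Γ.walkSign p * (-1) ^ p.edges.countP (· ∈ F) :=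
  prod_map_signEdge_setPositive hF p.edges

lemma walkSign_setPositive_of_forall_notMem {u v : Fin n} (p : Γ.G.Walk u v)
    (hp : ∀ e ∈ p.edges, e ∉ F) : (Γ.setPositive F).walkSign p = Γ.walkSign p :=
  congrArg List.prod <| List.map_congr_left fun e he => by
    rw [signEdge_setPositive, if_neg (hp e he)]

end SetPositive

def graftNegTriangle (a b c : Fin n) : SignedGraph n where
  G :=
    { Adj := fun i j => i ≠ j ∧ ((i ≠ a ∧ i ≠ b ∧ j ≠ a ∧ j ≠ b) ∨
        ((i = a ∨ i = b ∨ i = c) ∧ (j = a ∨ j = b ∨ j = c)))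
      symm := ⟨fun _ _ h => ⟨h.1.symm, by tauto⟩⟩
      loopless := ⟨fun _ h => h.1 rfl⟩ }
  sign i j := if s(i, j) = s(a, b) then -1 else 1
  sign_symm i j := by rw [Sym2.eq_swap]
  sign_pm i j _ := by split_ifs <;> simp

section GraftNegTriangle

variable {a b c : Fin n}

lemma eq_of_graftNegTriangle_adj {y z : Fin n} (h : (graftNegTriangle a b c).G.Adj y z)
    (hy : y = a ∨ y = b) (hza : z ≠ a) (hzb : z ≠ b) : z = c := by
  obtain ⟨-, h⟩ := h
  rcases hy with rfl | rfl <;> tauto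

lemma graftNegTriangle_sign_of_ne {i j : Fin n} (h : s(i, j) ≠ s(a, b)) :
    (graftNegTriangle a b c).sign i j = 1 := if_neg h

lemma unbalanced_graftNegTriangle (hab : a ≠ b) (hac : a ≠ c) (hbc : b ≠ c) :
    (graftNegTriangle a b c).Unbalanced := by
  have h₁ : (graftNegTriangle a b c).G.Adj a b := ⟨hab, by tauto⟩
  have h₂ : (graftNegTriangle a b c).G.Adj b c := ⟨hbc, by tauto⟩
  have h₃ : (graftNegTriangle a b c).G.Adj c a := ⟨hac.symm, by tauto⟩
  refine ⟨a, .cons h₁ (.cons h₂ (.cons h₃ .nil)), ?_, ?_⟩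
  · simp [Walk.cons_isCycle_iff, hab, hac, hbc, hab.symm, hac.symm]
  · have hbc' : s(b, c) ≠ s(a, b) := by simp [hab.symm, hac.symm]
    have hca' : s(c, a) ≠ s(a, b) := by simp [hac.symm, hbc.symm]
    rw [walkSign_cons, walkSign_cons, walkSign_cons, walkSign_nil,
      graftNegTriangle_sign_of_ne hbc', graftNegTriangle_sign_of_ne hca']
    simp [graftNegTriangle]

lemma graftNegTriangle_eq_of_adj {p q y z : Fin n} (he : s(p, q) = s(a, b))
    (hy : (graftNegTriangle a b c).G.Adj q y) (hz : (graftNegTriangle a b c).G.Adj z p)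
    (hyp : y ≠ p) (hzq : z ≠ q) : y = z := by
  have hyq := hy.ne.symm
  have hzp := hz.ne
  rcases Sym2.eq_iff.mp he with ⟨rfl, rfl⟩ | ⟨rfl, rfl⟩
  · rw [eq_of_graftNegTriangle_adj hy (.inr rfl) hyp hyq,
      eq_of_graftNegTriangle_adj hz.symm (.inl rfl) hzp hzq]
  · rw [eq_of_graftNegTriangle_adj hy (.inl rfl) hyq hyp,
      eq_of_graftNegTriangle_adj hz.symm (.inr rfl) hzq hzp]

lemma negC4Free_graftNegTriangle : (graftNegTriangle a b c).NegC4Free := by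
  intro u cyc hc h4 hneg
  obtain ⟨e, he, hse⟩ := exists_signEdge_eq_neg_one _ cyc hneg
  have hea : e = s(a, b) := by
    induction e with
    | _ i j => by_contra h; simp [graftNegTriangle_sign_of_ne h] at hse
  subst hea
  obtain _ | ⟨h₀, _ | ⟨h₁, _ | ⟨h₂, _ | ⟨h₃, _ | ⟨_, _⟩⟩⟩⟩⟩ := cyc <;>
    simp only [Walk.length_cons, Walk.length_nil] at h4 <;> try omega
  have hnd := hc.support_nodup
  simp only [Walk.support_cons, Walk.support_nil, List.tail_cons, List.nodup_cons,
    List.mem_cons, List.not_mem_nil, or_false, not_or] at hnd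
  simp only [Walk.edges_cons, Walk.edges_nil, List.mem_cons, List.not_mem_nil, or_false] at he
  obtain ⟨⟨h12, h13, h1u⟩, ⟨h23, h2u⟩, h3u, -⟩ := hnd
  -- on either side of `ab` the cycle continues to `c`, so two of its four vertices coincide
  rcases he with he | he | he | he
  · exact h23 (graftNegTriangle_eq_of_adj he.symm h₁ h₃ h2u (Ne.symm h13))
  · exact h3u (graftNegTriangle_eq_of_adj he.symm h₂ h₀ (Ne.symm h13) (Ne.symm h2u))
  · exact h1u (graftNegTriangle_eq_of_adj he.symm h₃ h₁ (Ne.symm h2u) h13).symm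
  · exact h12 (graftNegTriangle_eq_of_adj he.symm h₀ h₂ h13 h2u)

lemma adjMatrix_graftNegTriangle_of_ne {i j : Fin n} (hij : i ≠ j) (hia : i ≠ a) (hib : i ≠ b)
    (hja : j ≠ a) (hjb : j ≠ b) : (graftNegTriangle a b c).adjMatrix i j = 1 := by
  rw [adjMatrix_of_adj (graftNegTriangle a b c) (i := i) (j := j)
      ⟨hij, .inl ⟨hia, hib, hja, hjb⟩⟩,
    graftNegTriangle_sign_of_ne (by simp [hia, hib]), Int.cast_one]

lemma graftNegTriangle_adjMatrix_mulVec_apply (hac : a ≠ c) (hbc : b ≠ c) {x : Fin n → ℝ}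
    (hx : x b = 0) : ((graftNegTriangle a b c).adjMatrix *ᵥ x) a = x c := by
  have hterm : ∀ j, (graftNegTriangle a b c).adjMatrix a j * x j = if j = c then x c else 0 := by
    intro j
    by_cases hjc : j = c
    · subst hjc
      rw [adjMatrix_of_adj (graftNegTriangle a b j) (i := a) (j := j) ⟨hac, by tauto⟩,
        graftNegTriangle_sign_of_ne (by simp [hac.symm, hbc.symm])]
      simp
    by_cases hjb : j = b
    · simp [hjb, hx, hbc]
    rw [if_neg hjc, adjMatrix_of_not_adj, zero_mul]
    by_cases hja : j = a
    · exact hja ▸ (graftNegTriangle a b c).G.loopless.irrefl j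
    · exact fun h => hjc (eq_of_graftNegTriangle_adj h (.inl rfl) hja hjb)
  simp [Matrix.mulVec, dotProduct, hterm]

end GraftNegTriangle

def IsExtremal (Γ' : SignedGraph n) : Prop :=
  ∀ Γ : SignedGraph n, Γ.Unbalanced → Γ.NegC4Free → Γ.lambda1 ≤ Γ'.lambda1

structure IsNonnegUnitEigenvector (Γ : SignedGraph n) (x : Fin n → ℝ) : Prop where
  mulVec_eq : Γ.adjMatrix *ᵥ x = Γ.lambda1 • x
  nonneg : ∀ i, 0 ≤ x i
  dotProduct_self : x ⬝ᵥ x = 1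

section Extremal

variable {Γ Γ' : SignedGraph n} {x : Fin n → ℝ}

lemma IsNonnegUnitEigenvector.dotProduct_mulVec (hx : Γ.IsNonnegUnitEigenvector x) :
    x ⬝ᵥ Γ.adjMatrix *ᵥ x = Γ.lambda1 := by
  rw [hx.mulVec_eq, dotProduct_smul, hx.dotProduct_self, smul_eq_mul, mul_one]

lemma IsExtremal.adjMatrix_mulVec_eq (hmax : Γ'.IsExtremal) (hx : x ⬝ᵥ x = 1)
    (hub : Γ.Unbalanced) (hfree : Γ.NegC4Free)
    (h : Γ'.lambda1 ≤ x ⬝ᵥ Γ.adjMatrix *ᵥ x) :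
    Γ.adjMatrix *ᵥ x = Γ'.lambda1 • x := by
  have hle := Γ.dotProduct_adjMatrix_mulVec_le x
  rw [hx, mul_one] at hle
  have heq : Γ.lambda1 = Γ'.lambda1 := le_antisymm (hmax Γ hub hfree) (h.trans hle)
  rw [← heq]
  exact Γ.adjMatrix_mulVec_eq_of_dotProduct_eq (by rw [hx, mul_one]; linarith)

lemma IsExtremal.eq_of_eq_zero (hmax : Γ'.IsExtremal) (hx : Γ'.IsNonnegUnitEigenvector x)
    {a b : Fin n} (ha : x a = 0) (hb : x b = 0) : a = b := by
  by_contra hab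
  obtain ⟨c, hc⟩ : ∃ c, x c ≠ 0 := by
    by_contra! h
    simpa [dotProduct, h] using hx.dotProduct_self
  have hac : a ≠ c := fun h => hc (h ▸ ha)
  have hbc : b ≠ c := fun h => hc (h ▸ hb)
  have hle : Γ'.lambda1 ≤ x ⬝ᵥ (graftNegTriangle a b c).adjMatrix *ᵥ x := by
    refine hx.dotProduct_mulVec ▸ Matrix.dotProduct_mulVec_mono hx.nonneg fun i j hi hj => ?_
    rcases eq_or_ne i j with rfl | hij
    · rw [adjMatrix_self, adjMatrix_self]
    · rw [adjMatrix_graftNegTriangle_of_ne hij (fun h => hi (h ▸ ha)) (fun h => hi (h ▸ hb))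
        (fun h => hj (h ▸ ha)) (fun h => hj (h ▸ hb))]
      exact Γ'.adjMatrix_le_one i j
  have heig := hmax.adjMatrix_mulVec_eq hx.dotProduct_self
    (unbalanced_graftNegTriangle hab hac hbc) negC4Free_graftNegTriangle hle
  have hrow := congrFun heig a
  rw [graftNegTriangle_adjMatrix_mulVec_apply hac hbc hb, Pi.smul_apply, ha, smul_zero] at hrow
  exact hc hrow

lemma IsExtremal.adjMatrix_eq_of_le (hmax : Γ'.IsExtremal) (hx : Γ'.IsNonnegUnitEigenvector x)
    (hub : Γ.Unbalanced) (hfree : Γ.NegC4Free)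
    (hle : ∀ i j, Γ'.adjMatrix i j ≤ Γ.adjMatrix i j) :
    Γ.adjMatrix = Γ'.adjMatrix := by
  have heig := hmax.adjMatrix_mulVec_eq hx.dotProduct_self hub hfree
    (hx.dotProduct_mulVec ▸ Matrix.dotProduct_mulVec_mono hx.nonneg fun i j _ _ => hle i j)
  have hrow : ∀ a, (Γ'.adjMatrix *ᵥ x) a = (Γ.adjMatrix *ᵥ x) a := fun a => by
    rw [heig, hx.mulVec_eq]
  ext a b
  by_contra hne
  have hlt : Γ'.adjMatrix a b < Γ.adjMatrix a b := lt_of_le_of_ne (hle a b) (Ne.symm hne)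
  have hb := Matrix.eq_zero_of_mulVec_apply_eq hx.nonneg (hle a) hlt (hrow a)
  have ha := Matrix.eq_zero_of_mulVec_apply_eq hx.nonneg (hle b)
    (by rwa [Γ'.adjMatrix_comm, Γ.adjMatrix_comm]) (hrow b)
  obtain rfl := hmax.eq_of_eq_zero hx ha hb
  simp [adjMatrix_self] at hlt

lemma IsExtremal.not_unbalanced_deleteEdges (hmax : Γ'.IsExtremal)
    (hx : Γ'.IsNonnegUnitEigenvector x) (hfree : Γ'.NegC4Free) {a b : Fin n}
    (hab : Γ'.G.Adj a b) (hs : Γ'.sign a b = -1) : ¬ (Γ'.deleteEdges {s(a, b)}).Unbalanced := by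
  intro hub
  have hA := hmax.adjMatrix_eq_of_le hx hub hfree.deleteEdges
    (adjMatrix_le_adjMatrix_deleteEdges (by simpa using hs))
  have hab' := congrFun₂ hA a b
  rw [adjMatrix_deleteEdges_of_mem (Set.mem_singleton _), Γ'.adjMatrix_of_adj hab, hs] at hab'
  norm_num at hab'

lemma IsExtremal.mem_edges_of_isNegCycle (hmax : Γ'.IsExtremal)
    (hx : Γ'.IsNonnegUnitEigenvector x) (hfree : Γ'.NegC4Free) {a b : Fin n}
    (hab : Γ'.G.Adj a b) (hs : Γ'.sign a b = -1) {u : Fin n} {c : Γ'.G.Walk u u}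
    (hc : Γ'.IsNegCycle c) : s(a, b) ∈ c.edges := by
  by_contra h
  exact hmax.not_unbalanced_deleteEdges hx hfree hab hs
    (unbalanced_deleteEdges hc fun e he he' => h (Set.mem_singleton_iff.mp he' ▸ he))

lemma IsExtremal.walkSign_eq_neg_one_of_mem_edges (hmax : Γ'.IsExtremal)
    (hx : Γ'.IsNonnegUnitEigenvector x) (hub : Γ'.Unbalanced) (hfree : Γ'.NegC4Free)
    {a b : Fin n} (hab : Γ'.G.Adj a b) (hs : Γ'.sign a b = -1) {u : Fin n} {c : Γ'.G.Walk u u}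
    (hc : c.IsCycle) (he : s(a, b) ∈ c.edges) : Γ'.walkSign c = -1 := by
  obtain ⟨v, c₀, hc₀⟩ := hub
  rw [walkSign_eq_of_not_unbalanced_deleteEdges (hmax.not_unbalanced_deleteEdges hx hfree hab hs)
    hc.edges_nodup hc₀.1.edges_nodup he (hmax.mem_edges_of_isNegCycle hx hfree hab hs hc₀),
    hc₀.2]

lemma IsExtremal.eq_of_signEdge_eq_neg_one (hmax : Γ'.IsExtremal)
    (hx : Γ'.IsNonnegUnitEigenvector x) (hub : Γ'.Unbalanced) (hfree : Γ'.NegC4Free)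
    {e₁ e₂ : Sym2 (Fin n)} (he₁ : e₁ ∈ Γ'.G.edgeSet) (hs₁ : Γ'.signEdge e₁ = -1)
    (he₂ : e₂ ∈ Γ'.G.edgeSet) (hs₂ : Γ'.signEdge e₂ = -1) : e₁ = e₂ := by
  induction e₁ with | _ a b => ?_
  induction e₂ with | _ c d => ?_
  by_contra hne
  set F : Finset (Sym2 (Fin n)) := {s(a, b), s(c, d)}
  have hF : ∀ e ∈ F, Γ'.signEdge e = -1 := by simp [F, hs₁, hs₂]
  have hneg : ∀ e ∈ F, ∀ {u} {C : Γ'.G.Walk u u}, C.IsCycle → e ∈ C.edges →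
      Γ'.walkSign C = -1 := by
    simp only [F, Finset.mem_insert, Finset.mem_singleton, forall_eq_or_imp, forall_eq]
    exact ⟨fun hC => hmax.walkSign_eq_neg_one_of_mem_edges hx hub hfree he₁ hs₁ hC,
      fun hC => hmax.walkSign_eq_neg_one_of_mem_edges hx hub hfree he₂ hs₂ hC⟩
  have hubF : (Γ'.setPositive F).Unbalanced := by
    obtain ⟨u, c₀, hc₀⟩ := hub
    have hcount := hc₀.1.edges_nodup.countP_mem_eq_card (F := F) fun e he => by
      simp only [F, Finset.mem_insert, Finset.mem_singleton] at he
      rcases he with rfl | rfl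
      exacts [hmax.mem_edges_of_isNegCycle hx hfree he₁ hs₁ hc₀,
        hmax.mem_edges_of_isNegCycle hx hfree he₂ hs₂ hc₀]
    refine ⟨u, c₀, hc₀.1, ?_⟩
    rw [walkSign_setPositive hF, hc₀.2, hcount, Finset.card_pair hne]
    norm_num
  have hfreeF : (Γ'.setPositive F).NegC4Free := by
    intro u C hC h4 hC'
    refine hfree u C hC h4 ?_
    by_cases hCF : ∃ e ∈ C.edges, e ∈ F
    · obtain ⟨e, heC, heF⟩ := hCF
      exact hneg e heF hC heC
    · rw [← hC', walkSign_setPositive_of_forall_notMem (Γ := Γ') C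
        fun e heC heF => hCF ⟨e, heC, heF⟩]
  have hA := congrFun₂ (hmax.adjMatrix_eq_of_le hx hubF hfreeF
    fun i j => adjMatrix_le_adjMatrix_setPositive i j) a b
  rw [adjMatrix_setPositive_of_mem he₁ (by simp [F]), Γ'.adjMatrix_of_adj he₁,
    show Γ'.sign a b = -1 from hs₁] at hA
  norm_num at hA

end Extremal

end SignedGraph

theorem extremal_unique_negative_edge_general (n : ℕ) (Γ' : SignedGraph n)
    (hub : Γ'.Unbalanced) (hfree : Γ'.NegC4Free)
    (hmax : ∀ Γ : SignedGraph n, Γ.Unbalanced → Γ.NegC4Free → Γ.lambda1 ≤ Γ'.lambda1)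
    (x : Fin n → ℝ) (hx : Γ'.adjMatrix.mulVec x = Γ'.lambda1 • x)
    (hnn : ∀ i, 0 ≤ x i) (hunit : ∑ i, x i ^ 2 = 1) :
    ∃! e : Sym2 (Fin n), e ∈ Γ'.G.edgeSet ∧ Γ'.signEdge e = -1 := by
  have hx' : Γ'.IsNonnegUnitEigenvector x := ⟨hx, hnn, by simpa [dotProduct, sq] using hunit⟩
  have ⟨u, c, hc⟩ := hub
  obtain ⟨e, he, hse⟩ := Γ'.exists_signEdge_eq_neg_one c hc.2
  have heG := c.edges_subset_edgeSet he
  exact ⟨e, ⟨heG, hse⟩, fun e' he' =>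
    SignedGraph.IsExtremal.eq_of_signEdge_eq_neg_one hmax hx' hub hfree he'.1 he'.2 heG hse⟩

theorem extremal_unique_negative_edge (n : ℕ) (hn : 6 ≤ n) (Γ' : SignedGraph n)
    (hub : Γ'.Unbalanced) (hfree : Γ'.NegC4Free)
    (hmax : ∀ Γ : SignedGraph n, Γ.Unbalanced → Γ.NegC4Free → Γ.lambda1 ≤ Γ'.lambda1)
    (x : Fin n → ℝ) (hx : Γ'.adjMatrix.mulVec x = Γ'.lambda1 • x)
    (hnn : ∀ i, 0 ≤ x i) (hunit : ∑ i, x i ^ 2 = 1) :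
    ∃! e : Sym2 (Fin n), e ∈ Γ'.G.edgeSet ∧ Γ'.signEdge e = -1 :=
  extremal_unique_negative_edge_general n Γ' hub hfree hmax x hx hnn hunit
end
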